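/- Let (I, s, k, B) be a unary bin packing instance with all sizes s_i ≥ 2 and Σ_{i∈I} s_i = k·B. Construct a graph G as the disjoint union of connected graphs G_1, ..., G_{|I|} where G_i has s_i vertices, and consider the Schelling instance on G with k agent types, each having exactly B agents. Then G admits a perfect assignment if and only if the items can be partitioned into k sets I_1, ..., I_k with Σ_{i∈I_j} s_i = B for every j. -/

import Mathlib

open Classical Finset

noncomputable section

variable {V A T : Type*}

def occNbrs (G : SimpleGraph V) [Fintype A] (v : A ↪ V) (i : A) : Finset A :=
  univ.filter fun j => G.Adj (v i) (v j)

def util (G : SimpleGraph V) [Fintype A] (τ : A → T) (v : A ↪ V) (i : A) : ℚ :=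
  if (occNbrs G v i).card = 0 then 0
  else ((occNbrs G v i).filter fun j => τ j = τ i).card / (occNbrs G v i).card

def SW (G : SimpleGraph V) [Fintype A] (τ : A → T) (v : A ↪ V) : ℚ :=
  ∑ i, util G τ v i

def sortedUtilOn (G : SimpleGraph V) [Fintype A] (τ : A → T) (v : A ↪ V) (S : Finset A) : List ℚ :=
  Multiset.sort (S.val.map (util G τ v)) (· ≥ ·)

def weakDom (x y : List ℚ) : Prop :=
  x.length = y.length ∧ ∀ (i : ℕ) (hx : i < x.length) (hy : i < y.length), y.get ⟨i, hy⟩ ≤ x.get ⟨i, hx⟩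

def strictDom (x y : List ℚ) : Prop :=
  weakDom x y ∧ ∃ (i : ℕ) (hx : i < x.length) (hy : i < y.length), y.get ⟨i, hy⟩ < x.get ⟨i, hx⟩

/-! There are exactly `k * B` agents and vertices, so a perfect assignment occupies every
vertex and amounts to a coloring of the vertices by the `k` types, with `B` vertices of each
color, that is constant along edges; conversely such a coloring gives a perfect assignment
because every vertex has a neighbor (each `G_i` is connected with at least two vertices).
Colorings constant along edges are constant on each `G_i`, so they are exactly the colorings
of the items, and the color classes then have total size `B`. -/

theorem SimpleGraph.Reachable.apply_eq_of_forall_adj {β : Type*} {G : SimpleGraph V} (f : V → β)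
    (hf : ∀ x y, G.Adj x y → f x = f y) {u w : V} (h : G.Reachable u w) : f u = f w := by
  obtain ⟨p⟩ := h
  induction p with
  | nil => rfl
  | cons hadj _ ih => exact (hf _ _ hadj).trans ih

theorem SimpleGraph.exists_adj_of_preconnected_induce {G : SimpleGraph V} {S : Set V}
    (hS : (G.induce S).Preconnected) (hnt : S.Nontrivial) {x : V} (hx : x ∈ S) :
    ∃ y, G.Adj x y := by
  have : Nontrivial S := hnt.coe_sort
  obtain ⟨y, hy⟩ := hS.exists_adj_of_nontrivial ⟨x, hx⟩
  exact ⟨y, hy⟩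

theorem util_eq_one_iff [Fintype A] {G : SimpleGraph V} {τ : A → T} {v : A ↪ V} {a : A} :
    util G τ v a = 1 ↔ (occNbrs G v a).Nonempty ∧ ∀ b ∈ occNbrs G v a, τ b = τ a := by
  unfold util
  by_cases h : (occNbrs G v a).card = 0
  · simp [Finset.card_eq_zero.mp h]
  · rw [if_neg h, div_eq_one_iff_eq (by exact_mod_cast h), Nat.cast_inj, card_filter_eq_iff]
    exact (and_iff_right (Finset.card_ne_zero.mp h)).symm

theorem forall_util_eq_one_iff_of_surjective [Fintype A] {G : SimpleGraph V} {τ : A → T}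
    {v : A ↪ V} (hv : Function.Surjective v) :
    (∀ a, util G τ v a = 1) ↔ (∀ x, ∃ y, G.Adj x y) ∧ ∀ a b, G.Adj (v a) (v b) → τ a = τ b := by
  simp only [util_eq_one_iff, occNbrs, Finset.Nonempty, mem_filter, mem_univ, true_and]
  constructor
  · intro h
    refine ⟨fun x => ?_, fun a b hab => ((h a).2 b hab).symm⟩
    obtain ⟨a, rfl⟩ := hv x
    obtain ⟨b, hb⟩ := (h a).1
    exact ⟨v b, hb⟩
  · rintro ⟨hnbr, hconst⟩ a
    obtain ⟨y, hy⟩ := hnbr (v a)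
    obtain ⟨b, rfl⟩ := hv y
    exact ⟨⟨b, hy⟩, fun b hb => (hconst a b hb).symm⟩

theorem exists_equiv_prod_fin_of_card_fiber [Fintype V] {κ : Type*} [DecidableEq κ]
    (c : V → κ) {B : ℕ} (hc : ∀ j, #{x | c x = j} = B) :
    ∃ e : κ × Fin B ≃ V, ∀ a, c (e a) = a.1 := by
  have hfiber (j : κ) : Fin B ≃ {x // c x = j} :=
    Fintype.equivOfCardEq (by rw [Fintype.card_fin, Fintype.card_subtype, hc j])
  refine ⟨(Equiv.sigmaEquivProd κ (Fin B)).symm.trans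
    ((Equiv.sigmaCongrRight hfiber).trans (Equiv.sigmaFiberEquiv c)),
    fun a => (hfiber a.1 a.2).2⟩

theorem exists_perfect_iff_exists_edge_constant_coloring [Fintype V] {κ : Type*} [Fintype κ]
    [DecidableEq κ] (G : SimpleGraph V) (B : ℕ) (hcard : Fintype.card V = Fintype.card κ * B)
    (hnbr : ∀ x, ∃ y, G.Adj x y) :
    (∃ v : κ × Fin B ↪ V, ∀ a, util G Prod.fst v a = 1) ↔
      ∃ c : V → κ, (∀ x y, G.Adj x y → c x = c y) ∧ ∀ j, #{x | c x = j} = B := by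
  constructor
  · rintro ⟨v, hv⟩
    have hbij : Function.Bijective v :=
      (Fintype.bijective_iff_injective_and_card v).mpr ⟨v.injective, by simp [hcard]⟩
    let e := Equiv.ofBijective v hbij
    have hconst := ((forall_util_eq_one_iff_of_surjective hbij.2).mp hv).2
    refine ⟨fun x => (e.symm x).1, fun x y hxy => hconst _ _ ?_, fun j => ?_⟩
    · simpa only [e, Equiv.ofBijective_apply_symm_apply] using hxy
    calc #{x | (e.symm x).1 = j} = #{a : κ × Fin B | a.1 = j} :=
          card_equiv e.symm (by simp)
      _ = #({j} ×ˢ (univ : Finset (Fin B))) := by congr 1; ext ⟨a, b⟩; simp [eq_comm]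
      _ = B := by simp
  · rintro ⟨c, hc, hfiber⟩
    obtain ⟨e, he⟩ := exists_equiv_prod_fin_of_card_fiber c hfiber
    refine ⟨e.toEmbedding, (forall_util_eq_one_iff_of_surjective e.surjective).mpr ⟨hnbr, ?_⟩⟩
    intro a b hab
    rw [← he a, ← he b]
    exact hc _ _ hab

section Blocks

variable {I : Type*} {s : I → ℕ} {G : SimpleGraph (Σ i, Fin (s i))}

theorem exists_adj_of_preconnected_blocks (hs : ∀ i, 2 ≤ s i)
    (hconn : ∀ i, (G.induce {x | x.1 = i}).Preconnected) (x : Σ i, Fin (s i)) :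
    ∃ y, G.Adj x y :=
  SimpleGraph.exists_adj_of_preconnected_induce (hconn x.1)
    ⟨⟨x.1, ⟨0, zero_lt_two.trans_le (hs x.1)⟩⟩, rfl, ⟨x.1, ⟨1, hs x.1⟩⟩, rfl, by simp⟩ rfl

theorem card_filter_sigma_fst [Fintype I] (p : I → Prop) [DecidablePred p] :
    #{x : Σ i, Fin (s i) | p x.1} = ∑ i ∈ univ.filter p, s i := by
  rw [show ({x : Σ i, Fin (s i) | p x.1} : Finset _) = (univ.filter p).sigma fun _ => univ by
    ext; simp, card_sigma]
  simp

theorem exists_edge_constant_coloring_iff [Fintype I] {κ : Type*} [DecidableEq κ]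
    (hs : ∀ i, 0 < s i) (hcomp : ∀ u w, G.Adj u w → u.1 = w.1)
    (hconn : ∀ i, (G.induce {x | x.1 = i}).Preconnected) (B : ℕ) :
    (∃ c : (Σ i, Fin (s i)) → κ, (∀ x y, G.Adj x y → c x = c y) ∧ ∀ j, #{x | c x = j} = B) ↔
      ∃ P : I → κ, ∀ j, ∑ i ∈ univ.filter (fun i => P i = j), s i = B := by
  constructor
  · rintro ⟨c, hc, hfiber⟩
    let base (i : I) : Σ i, Fin (s i) := ⟨i, ⟨0, hs i⟩⟩
    have hblock (x : Σ i, Fin (s i)) : c x = c (base x.1) :=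
      ((hconn x.1 ⟨x, rfl⟩ ⟨base x.1, rfl⟩).map
        (SimpleGraph.Embedding.induce _).toHom).apply_eq_of_forall_adj c hc
    refine ⟨fun i => c (base i), fun j => ?_⟩
    dsimp only
    rw [← hfiber j, ← card_filter_sigma_fst]
    simp only [← hblock]
  · rintro ⟨P, hP⟩
    refine ⟨fun x => P x.1, fun x y hxy => congrArg P (hcomp x y hxy), fun j => ?_⟩
    exact (card_filter_sigma_fst (P · = j)).trans (hP j)

end Blocks

theorem perfect_assignment_iff_bin_packing_general
    {I : Type*} [Fintype I] (s : I → ℕ) (hs : ∀ i, 2 ≤ s i)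
    (k B : ℕ)
    (hsum : ∑ i, s i = k * B)
    (G : SimpleGraph (Σ i : I, Fin (s i)))
    (hcomp : ∀ u w : (Σ i : I, Fin (s i)), G.Adj u w → u.1 = w.1)
    (hconn : ∀ i : I, (G.induce {x : (Σ i : I, Fin (s i)) | x.1 = i}).Connected) :
    (∃ v : (Fin k × Fin B) ↪ (Σ i : I, Fin (s i)),
        ∀ a, util G Prod.fst v a = 1) ↔
      (∃ P : I → Fin k, ∀ j : Fin k,
        ∑ i ∈ univ.filter (fun i => P i = j), s i = B) := by
  have hcard : Fintype.card (Σ i, Fin (s i)) = Fintype.card (Fin k) * B := by simp [hsum]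
  rw [exists_perfect_iff_exists_edge_constant_coloring G B hcard
      (exists_adj_of_preconnected_blocks hs fun i => (hconn i).preconnected),
    exists_edge_constant_coloring_iff (fun i => zero_lt_two.trans_le (hs i)) hcomp
      fun i => (hconn i).preconnected]

theorem perfect_assignment_iff_bin_packing
    {I : Type*} [Fintype I] (s : I → ℕ) (hs : ∀ i, 2 ≤ s i)
    (k B : ℕ) (hk : 1 ≤ k) (hB : 1 ≤ B)
    (hsum : ∑ i, s i = k * B)
    (G : SimpleGraph (Σ i : I, Fin (s i)))
    (hcomp : ∀ u w : (Σ i : I, Fin (s i)), G.Adj u w → u.1 = w.1)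
    (hconn : ∀ i : I, (G.induce {x : (Σ i : I, Fin (s i)) | x.1 = i}).Connected) :
    (∃ v : (Fin k × Fin B) ↪ (Σ i : I, Fin (s i)),
        ∀ a, util G Prod.fst v a = 1) ↔
      (∃ P : I → Fin k, ∀ j : Fin k,
        ∑ i ∈ univ.filter (fun i => P i = j), s i = B) :=
  perfect_assignment_iff_bin_packing_general s hs k B hsum G hcomp hconn
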